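/- A Lagrangian W of V contains no perfect cube if and only if W lies in the SL(2,ℂ)-orbit of the Lagrangian span{X²Y, X³ + Y³}; in particular, SL(2,ℂ) acts transitively on the set of Lagrangians of V containing no perfect cube. -/

import Mathlib

noncomputable section

open MvPolynomial

/-- The polynomial ring `ℂ[X,Y]`. -/
abbrev P2 : Type := MvPolynomial (Fin 2) ℂ

/-- The variable `X`. -/
def Xv : P2 := X 0

/-- The variable `Y`. -/
def Yv : P2 := X 1

/-- `V`: the space of homogeneous cubic polynomials in `X, Y`. -/
def Vcubic : Submodule ℂ P2 := homogeneousSubmodule (Fin 2) ℂ 3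

/-- The coefficient of `X^i Y^j`. -/
def cf (i j : ℕ) (p : P2) : ℂ := coeff (Finsupp.single 0 i + Finsupp.single 1 j) p

/-- The alternating bilinear form `ω` with `ω(X³,Y³) = 1`, `ω(X²Y,XY²) = -1/3`,
all other pairings of distinct basis vectors being `0`. -/
def omegaForm (p q : P2) : ℂ :=
  cf 3 0 p * cf 0 3 q - cf 0 3 p * cf 3 0 q
    - (1 / 3) * (cf 2 1 p * cf 1 2 q - cf 1 2 p * cf 2 1 q)

/-- The linear form `b X - a Y` associated to the point `[a : b] ∈ ℂℙ¹`. -/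
def lf (a b : ℂ) : P2 := C b * Xv - C a * Yv

/-- A Lagrangian of `V`: a 2-dimensional subspace contained in `V` on which `ω` vanishes. -/
def IsLagrangian (W : Submodule ℂ P2) : Prop :=
  W ≤ Vcubic ∧ Module.finrank ℂ W = 2 ∧ ∀ p ∈ W, ∀ q ∈ W, omegaForm p q = 0

/-- A perfect cube: a nonzero element of the form `c • (bX - aY)³`. -/
def IsPerfectCube (p : P2) : Prop :=
  ∃ c a b : ℂ, c ≠ 0 ∧ (a ≠ 0 ∨ b ≠ 0) ∧ p = C c * lf a b ^ 3

/-- The action of `SL(2,ℂ)` on `ℂ[X,Y]` by linear substitution of the variables. -/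
def subst (g : Matrix.SpecialLinearGroup (Fin 2) ℂ) : P2 →ₐ[ℂ] P2 :=
  aeval (fun i => C (g.1 i 0) * Xv + C (g.1 i 1) * Yv)

/-- The induced action of `SL(2,ℂ)` on subspaces of `ℂ[X,Y]`. -/
def mapAct (g : Matrix.SpecialLinearGroup (Fin 2) ℂ) (W : Submodule ℂ P2) :
    Submodule ℂ P2 :=
  W.map (subst g).toLinearMap

/-- The `SL(2,ℂ)`-orbit of a subspace. -/
def slOrbit (W₀ : Submodule ℂ P2) : Set (Submodule ℂ P2) := {W | ∃ g, W = mapAct g W₀}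

/-- The Lagrangian `span{X³, X²Y}`. -/
def L₁ : Submodule ℂ P2 := Submodule.span ℂ {Xv ^ 3, Xv ^ 2 * Yv}

/-- The Lagrangian `span{X³, XY²}`. -/
def L₂ : Submodule ℂ P2 := Submodule.span ℂ {Xv ^ 3, Xv * Yv ^ 2}

/-- The Lagrangian `span{X²Y, X³ + Y³}`. -/
def L₃ : Submodule ℂ P2 := Submodule.span ℂ {Xv ^ 2 * Yv, Xv ^ 3 + Yv ^ 3}

/-!
A pencil of binary cubics always contains a member with a repeated root: in an affine chart it is
found at a root of the Wronskian of the pencil, a quartic. In a Lagrangian `W` without perfect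
cubes this member is `ℓ₁² ℓ₂` with `ℓ₁, ℓ₂` independent, so some `g ∈ SL(2,ℂ)` moves it to a
multiple of `X²Y`. Isotropy against `X²Y` then leaves `g W = span {X²Y, A X³ + D Y³}` with
`A D ≠ 0`, and a diagonal matrix moves `L₃` onto it. Conversely `L₃` contains no perfect cube and
the action preserves perfect cubes.
-/

@[simp] lemma cf_zero (i j : ℕ) : cf i j 0 = 0 := coeff_zero _

lemma cf_add (i j : ℕ) (p q : P2) : cf i j (p + q) = cf i j p + cf i j q := coeff_add _ _ _

lemma cf_smul (i j : ℕ) (e : ℂ) (p : P2) : cf i j (e • p) = e * cf i j p := coeff_smul _ _ _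

lemma C_mul_Xv_pow_mul_Yv_pow (e : ℂ) (k l : ℕ) :
    C e * Xv ^ k * Yv ^ l = monomial (Finsupp.single 0 k + Finsupp.single 1 l) e := by
  rw [Xv, Yv, X_pow_eq_monomial, X_pow_eq_monomial, C_mul_monomial, monomial_mul, mul_one, mul_one]

lemma single_add_single_inj {i j k l : ℕ} :
    (Finsupp.single (0 : Fin 2) k + Finsupp.single 1 l = Finsupp.single 0 i + Finsupp.single 1 j)
      ↔ k = i ∧ l = j := by
  refine ⟨fun h => ⟨?_, ?_⟩, fun ⟨hk, hl⟩ => hk ▸ hl ▸ rfl⟩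
  · simpa using DFunLike.congr_fun h 0
  · simpa using DFunLike.congr_fun h 1

lemma cf_C_mul_Xv_pow_mul_Yv_pow (i j k l : ℕ) (e : ℂ) :
    cf i j (C e * Xv ^ k * Yv ^ l) = if k = i ∧ l = j then e else 0 := by
  rw [C_mul_Xv_pow_mul_Yv_pow, cf, coeff_monomial]
  exact if_congr single_add_single_inj rfl rfl

lemma isHomogeneous_C_mul_Xv_pow_mul_Yv_pow (e : ℂ) (k l : ℕ) :
    (C e * Xv ^ k * Yv ^ l).IsHomogeneous (k + l) := by
  rw [C_mul_Xv_pow_mul_Yv_pow]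
  exact isHomogeneous_monomial _ (by simp [map_add, Finsupp.degree_single])

def cubic (a b c d : ℂ) : P2 :=
  C a * Xv ^ 3 + C b * Xv ^ 2 * Yv + C c * Xv * Yv ^ 2 + C d * Yv ^ 3

lemma cubic_eq_sum_monomials (a b c d : ℂ) :
    cubic a b c d = C a * Xv ^ 3 * Yv ^ 0 + C b * Xv ^ 2 * Yv ^ 1 + C c * Xv ^ 1 * Yv ^ 2
      + C d * Xv ^ 0 * Yv ^ 3 := by
  simp [cubic]

lemma cubic_mem_Vcubic (a b c d : ℂ) : cubic a b c d ∈ Vcubic := by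
  have h := isHomogeneous_C_mul_Xv_pow_mul_Yv_pow
  rw [Vcubic, mem_homogeneousSubmodule, cubic_eq_sum_monomials]
  exact (((h a 3 0).add (h b 2 1)).add (h c 1 2)).add (h d 0 3)

@[simp] lemma cf_cubic_3_0 (a b c d : ℂ) : cf 3 0 (cubic a b c d) = a := by
  rw [cubic_eq_sum_monomials]; simp only [cf_add, cf_C_mul_Xv_pow_mul_Yv_pow]; norm_num
@[simp] lemma cf_cubic_2_1 (a b c d : ℂ) : cf 2 1 (cubic a b c d) = b := by
  rw [cubic_eq_sum_monomials]; simp only [cf_add, cf_C_mul_Xv_pow_mul_Yv_pow]; norm_num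
@[simp] lemma cf_cubic_1_2 (a b c d : ℂ) : cf 1 2 (cubic a b c d) = c := by
  rw [cubic_eq_sum_monomials]; simp only [cf_add, cf_C_mul_Xv_pow_mul_Yv_pow]; norm_num
@[simp] lemma cf_cubic_0_3 (a b c d : ℂ) : cf 0 3 (cubic a b c d) = d := by
  rw [cubic_eq_sum_monomials]; simp only [cf_add, cf_C_mul_Xv_pow_mul_Yv_pow]; norm_num

lemma cf_eq_zero_of_mem_Vcubic {p : P2} (hp : p ∈ Vcubic) {i j : ℕ} (hij : i + j ≠ 3) :
    cf i j p = 0 :=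
  ((mem_homogeneousSubmodule 3 p).1 hp).coeff_eq_zero
    (by simpa [map_add, Finsupp.degree_single] using hij)

lemma eq_cubic_of_mem_Vcubic {p : P2} (hp : p ∈ Vcubic) :
    p = cubic (cf 3 0 p) (cf 2 1 p) (cf 1 2 p) (cf 0 3 p) := by
  ext m
  obtain ⟨i, j, rfl⟩ : ∃ i j : ℕ, m = Finsupp.single 0 i + Finsupp.single 1 j :=
    ⟨m 0, m 1, by ext x; fin_cases x <;> simp⟩
  change cf i j p = cf i j (cubic _ _ _ _)
  by_cases hij : i + j = 3
  · obtain ⟨rfl, rfl⟩ | ⟨rfl, rfl⟩ | ⟨rfl, rfl⟩ | ⟨rfl, rfl⟩ : (i = 3 ∧ j = 0) ∨ (i = 2 ∧ j = 1) ∨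
        (i = 1 ∧ j = 2) ∨ (i = 0 ∧ j = 3) := by omega
    all_goals simp
  · rw [cf_eq_zero_of_mem_Vcubic hp hij, cf_eq_zero_of_mem_Vcubic (cubic_mem_Vcubic _ _ _ _) hij]

local notation "SL₂" => Matrix.SpecialLinearGroup (Fin 2) ℂ

section Action

variable (g : SL₂)

@[simp] lemma subst_C (x : ℂ) : subst g (C x) = C x := by simp [subst]

@[simp] lemma subst_Xv : subst g Xv = C (g.1 0 0) * Xv + C (g.1 0 1) * Yv := by
  simp [subst, Xv]

@[simp] lemma subst_Yv : subst g Yv = C (g.1 1 0) * Xv + C (g.1 1 1) * Yv := by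
  simp [subst, Yv, Xv]

lemma det_fin_two_eq_one : g.1 0 0 * g.1 1 1 - g.1 0 1 * g.1 1 0 = 1 := by
  rw [← Matrix.det_fin_two, g.2]

lemma subst_cubic (a b c d : ℂ) :
    subst g (cubic a b c d) =
      cubic
        (a * g.1 0 0 ^ 3 + b * g.1 0 0 ^ 2 * g.1 1 0 + c * g.1 0 0 * g.1 1 0 ^ 2 + d * g.1 1 0 ^ 3)
        (3 * a * g.1 0 0 ^ 2 * g.1 0 1
          + b * (g.1 0 0 ^ 2 * g.1 1 1 + 2 * g.1 0 0 * g.1 0 1 * g.1 1 0)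
          + c * (2 * g.1 0 0 * g.1 1 0 * g.1 1 1 + g.1 0 1 * g.1 1 0 ^ 2)
          + 3 * d * g.1 1 0 ^ 2 * g.1 1 1)
        (3 * a * g.1 0 0 * g.1 0 1 ^ 2
          + b * (2 * g.1 0 0 * g.1 0 1 * g.1 1 1 + g.1 0 1 ^ 2 * g.1 1 0)
          + c * (g.1 0 0 * g.1 1 1 ^ 2 + 2 * g.1 0 1 * g.1 1 0 * g.1 1 1)
          + 3 * d * g.1 1 0 * g.1 1 1 ^ 2)
        (a * g.1 0 1 ^ 3 + b * g.1 0 1 ^ 2 * g.1 1 1 + c * g.1 0 1 * g.1 1 1 ^ 2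
          + d * g.1 1 1 ^ 3) := by
  simp only [cubic, map_add, map_mul, map_pow, map_ofNat, subst_Xv, subst_Yv, subst_C]
  ring

lemma subst_lf (a b : ℂ) :
    subst g (lf a b) = lf (a * g.1 1 1 - b * g.1 0 1) (b * g.1 0 0 - a * g.1 1 0) := by
  simp only [lf, map_sub, map_mul, subst_C, subst_Xv, subst_Yv]
  ring

lemma subst_subst (h : SL₂) (p : P2) : subst g (subst h p) = subst (h * g) p := by
  have hcomp : (subst g).comp (subst h) = subst (h * g) := by
    refine MvPolynomial.algHom_ext fun i => ?_
    fin_cases i <;>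
      simp [subst, Xv, Yv, Matrix.SpecialLinearGroup.coe_mul, Matrix.mul_apply,
        Fin.sum_univ_two] <;>
      ring
  exact DFunLike.congr_fun hcomp p

lemma subst_one (p : P2) : subst 1 p = p := by
  have hone : subst 1 = AlgHom.id ℂ P2 := by
    refine MvPolynomial.algHom_ext fun i => ?_
    fin_cases i <;> simp [subst, Xv, Yv]
  exact DFunLike.congr_fun hone p

lemma subst_inv_subst (p : P2) : subst g⁻¹ (subst g p) = p := by
  rw [subst_subst, mul_inv_cancel, subst_one]

lemma subst_mem_Vcubic {p : P2} (hp : p ∈ Vcubic) : subst g p ∈ Vcubic := by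
  rw [eq_cubic_of_mem_Vcubic hp, subst_cubic]
  exact cubic_mem_Vcubic _ _ _ _

lemma omegaForm_cubic (a b c d a' b' c' d' : ℂ) :
    omegaForm (cubic a b c d) (cubic a' b' c' d') =
      a * d' - d * a' - 1 / 3 * (b * c' - c * b') := by
  simp [omegaForm]

lemma omegaForm_subst {p q : P2} (hp : p ∈ Vcubic) (hq : q ∈ Vcubic) :
    omegaForm (subst g p) (subst g q) = omegaForm p q := by
  rw [eq_cubic_of_mem_Vcubic hp, eq_cubic_of_mem_Vcubic hq, subst_cubic, subst_cubic,
    omegaForm_cubic, omegaForm_cubic]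
  -- `ω` is multiplied by `det g ^ 3`, and `det g ^ 3 - 1 = (det g - 1) (det g ^ 2 + det g + 1)`
  have hdet := det_fin_two_eq_one g
  set δ := g.1 0 0 * g.1 1 1 - g.1 0 1 * g.1 1 0
  linear_combination (δ ^ 2 + δ + 1) * (cf 3 0 p * cf 0 3 q - cf 0 3 p * cf 3 0 q
    - 1 / 3 * (cf 2 1 p * cf 1 2 q - cf 1 2 p * cf 2 1 q)) * hdet

lemma IsPerfectCube.subst {p : P2} (hp : IsPerfectCube p) : IsPerfectCube (subst g p) := by
  obtain ⟨c, a, b, hc, hab, rfl⟩ := hp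
  refine ⟨c, _, _, hc, ?_, by rw [map_mul, map_pow, subst_C, subst_lf]⟩
  by_contra! h
  have hdet := det_fin_two_eq_one g
  have ha : a = 0 := by linear_combination g.1 0 0 * h.1 + g.1 0 1 * h.2 - a * hdet
  have hb : b = 0 := by linear_combination g.1 1 0 * h.1 + g.1 1 1 * h.2 - b * hdet
  exact hab.elim (· ha) (· hb)

lemma isPerfectCube_subst_iff {p : P2} : IsPerfectCube (subst g p) ↔ IsPerfectCube p :=
  ⟨fun h => subst_inv_subst g p ▸ h.subst g⁻¹, (·.subst g)⟩

end Action

lemma mapAct_mapAct (g h : SL₂) (W : Submodule ℂ P2) :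
    mapAct g (mapAct h W) = mapAct (h * g) W := by
  have hcomp : (subst g).toLinearMap ∘ₗ (subst h).toLinearMap = (subst (h * g)).toLinearMap :=
    LinearMap.ext (subst_subst g h)
  rw [mapAct, mapAct, mapAct, ← Submodule.map_comp, hcomp]

lemma mapAct_one (W : Submodule ℂ P2) : mapAct 1 W = W := by
  have hone : (subst 1).toLinearMap = LinearMap.id := LinearMap.ext subst_one
  rw [mapAct, hone, Submodule.map_id]

lemma mapAct_span_pair (g : SL₂) (x y : P2) :
    mapAct g (Submodule.span ℂ {x, y}) = Submodule.span ℂ {subst g x, subst g y} := by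
  rw [mapAct, Submodule.map_span, Set.image_pair]
  rfl

lemma mem_slOrbit_of_mapAct_mem {W₀ W : Submodule ℂ P2} (g : SL₂)
    (h : mapAct g W ∈ slOrbit W₀) : W ∈ slOrbit W₀ := by
  obtain ⟨g', hg'⟩ := h
  refine ⟨g' * g⁻¹, ?_⟩
  rw [← mapAct_mapAct, ← hg', mapAct_mapAct, mul_inv_cancel, mapAct_one]

lemma exists_isPerfectCube_mem_mapAct_iff (g : SL₂) (W : Submodule ℂ P2) :
    (∃ p ∈ mapAct g W, IsPerfectCube p) ↔ ∃ p ∈ W, IsPerfectCube p := by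
  simp only [mapAct, Submodule.mem_map, AlgHom.toLinearMap_apply]
  constructor
  · rintro ⟨_, ⟨p, hp, rfl⟩, hcube⟩
    exact ⟨p, hp, (isPerfectCube_subst_iff g).1 hcube⟩
  · rintro ⟨p, hp, hcube⟩
    exact ⟨_, ⟨p, hp, rfl⟩, hcube.subst g⟩

lemma IsLagrangian.mapAct {W : Submodule ℂ P2} (hW : IsLagrangian W) (g : SL₂) :
    IsLagrangian (mapAct g W) := by
  obtain ⟨hV, hdim, hiso⟩ := hW
  refine ⟨?_, ?_, ?_⟩
  · rintro _ ⟨p, hp, rfl⟩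
    exact subst_mem_Vcubic g (hV hp)
  · have hinj : Function.Injective (subst g).toLinearMap :=
      Function.LeftInverse.injective (subst_inv_subst g)
    exact (Submodule.equivMapOfInjective _ hinj W).finrank_eq.symm.trans hdim
  · rintro _ ⟨p, hp, rfl⟩ _ ⟨q, hq, rfl⟩
    exact (omegaForm_subst g (hV hp) (hV hq)).trans (hiso p hp q hq)

section LinearAlgebra

variable {K V : Type*} [Field K] [AddCommGroup V] [Module K V]

lemma exists_linearIndependent_pair_eq_span {W : Submodule K V} (hW : Module.finrank K W = 2)
    {r : V} (hr : r ∈ W) (hr0 : r ≠ 0) :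
    ∃ q ∈ W, LinearIndependent K ![r, q] ∧ W = Submodule.span K {r, q} := by
  have : FiniteDimensional K W := Module.finite_of_finrank_eq_succ hW
  obtain ⟨q, hq⟩ := exists_linearIndependent_pair_of_one_lt_finrank (R := K)
    (by omega : 1 < Module.finrank K W) (x := ⟨r, hr⟩) (by simpa using hr0)
  have hli : LinearIndependent K ![r, (q : V)] := LinearIndependent.pair_iff.2 fun s t h =>
    LinearIndependent.pair_iff.1 hq s t (Subtype.ext (by simpa using h))
  refine ⟨q, q.2, hli, (Submodule.eq_of_le_of_finrank_eq ?_ ?_).symm⟩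
  · rw [Submodule.span_le]
    rintro _ (rfl | rfl)
    exacts [hr, q.2]
  · rw [hW, ← Matrix.range_cons_cons_empty, finrank_span_eq_card hli, Fintype.card_fin]

lemma span_pair_sub_smul (x y : V) (k : K) :
    Submodule.span K {x, y - k • x} = Submodule.span K {x, y} := by
  ext z
  simp only [Submodule.mem_span_pair]
  constructor
  · rintro ⟨a, b, rfl⟩
    exact ⟨a - b * k, b, by module⟩
  · rintro ⟨a, b, rfl⟩
    exact ⟨a + b * k, b, by module⟩

lemma span_pair_smul_smul {c d : K} (hc : c ≠ 0) (hd : d ≠ 0) (x y : V) :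
    Submodule.span K {c • x, d • y} = Submodule.span K {x, y} := by
  rw [Submodule.span_insert, Submodule.span_insert, Submodule.span_singleton_smul_eq hc.isUnit,
    Submodule.span_singleton_smul_eq hd.isUnit]

lemma exists_mul_add_mul_eq_zero_of_det_eq_zero {a b c d : K} (h : a * d - b * c = 0) :
    ∃ s t : K, (s ≠ 0 ∨ t ≠ 0) ∧ s * a + t * b = 0 ∧ s * c + t * d = 0 := by
  by_cases hab : a = 0 ∧ b = 0
  · by_cases hcd : c = 0 ∧ d = 0
    · exact ⟨1, 0, Or.inl one_ne_zero, by simp [hab, hcd]⟩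
    · refine ⟨d, -c, ?_, by simp [hab], by ring⟩
      rw [neg_ne_zero]; tauto
  · exact ⟨b, -a, by rw [neg_ne_zero]; tauto, by ring, by linear_combination -h⟩

end LinearAlgebra

lemma exists_quartic_eq_zero {K : Type*} [Field K] [IsAlgClosed K] {a : K} (ha : a ≠ 0)
    (b c d e : K) : ∃ x, a * x ^ 4 + b * x ^ 3 + c * x ^ 2 + d * x + e = 0 := by
  set f : Polynomial K := Polynomial.C a * Polynomial.X ^ 4 + Polynomial.C b * Polynomial.X ^ 3
    + Polynomial.C c * Polynomial.X ^ 2 + Polynomial.C d * Polynomial.X + Polynomial.C e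
  have hcoeff : f.coeff 4 = a := by simp [f]
  have hdeg : f.degree ≠ 0 := fun h0 => by
    have := Polynomial.le_degree_of_ne_zero (hcoeff ▸ ha : f.coeff 4 ≠ 0)
    rw [h0] at this
    exact absurd this (by decide)
  obtain ⟨x, hx⟩ := IsAlgClosed.exists_root f hdeg
  exact ⟨x, by simpa [f] using hx⟩

lemma smul_cubic (k a b c d : ℂ) :
    k • cubic a b c d = cubic (k * a) (k * b) (k * c) (k * d) := by
  simp only [cubic, smul_eq_C_mul, C_mul]
  ring

lemma cubic_sub (a b c d a' b' c' d' : ℂ) :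
    cubic a b c d - cubic a' b' c' d' = cubic (a - a') (b - b') (c - c') (d - d') := by
  simp only [cubic, C_sub]
  ring

lemma C_mul_lf_pow_three (c a b : ℂ) :
    C c * lf a b ^ 3 =
      cubic (c * b ^ 3) (-(3 * c * a * b ^ 2)) (3 * c * a ^ 2 * b) (-(c * a ^ 3)) := by
  simp only [cubic, lf, C_mul, C_neg, C_pow, map_ofNat]
  ring

lemma lf_mul_mul (k u v : ℂ) : lf (k * u) (k * v) = C k * lf u v := by
  simp only [lf, C_mul]
  ring

/-- `p = (vX - uY)² (tX - sY)` with `[u : v] ∈ ℂℙ¹`; `p = 0` is allowed. -/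
def HasRepeatedRoot (p : P2) : Prop :=
  ∃ u v s t : ℂ, (u ≠ 0 ∨ v ≠ 0) ∧ p = lf u v ^ 2 * lf s t

lemma hasRepeatedRoot_cubic_zero_zero (c d : ℂ) : HasRepeatedRoot (cubic 0 0 c d) :=
  ⟨-1, 0, -d, c, Or.inl (neg_ne_zero.2 one_ne_zero), by
    simp only [cubic, lf, C_0, C_neg, C_1]
    ring⟩

lemma hasRepeatedRoot_cubic_of_root {a b c d x : ℂ} (h₀ : a * x ^ 3 + b * x ^ 2 + c * x + d = 0)
    (h₁ : 3 * a * x ^ 2 + 2 * b * x + c = 0) : HasRepeatedRoot (cubic a b c d) := by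
  obtain rfl : c = -(3 * a * x ^ 2 + 2 * b * x) := by linear_combination h₁
  obtain rfl : d = 2 * a * x ^ 3 + b * x ^ 2 := by linear_combination h₀ - x * h₁
  refine ⟨x, 1, -(b + 2 * a * x), a, Or.inr one_ne_zero, ?_⟩
  simp only [cubic, lf, C_1, C_neg, C_add, C_mul, C_pow, map_ofNat]
  ring

/-- The Wronskian `f g' - f' g` of `f = a x³ + b x² + c x + d` and `g = a' x³ + ⋯` is a quartic
with leading coefficient `a' b - a b'`. At one of its roots some member of the pencil has a double
root; if that coefficient vanishes, some member has a double root at infinity. -/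
lemma exists_hasRepeatedRoot_smul_add_smul (a b c d a' b' c' d' : ℂ) :
    ∃ s t : ℂ, (s ≠ 0 ∨ t ≠ 0) ∧
      HasRepeatedRoot
        (cubic (s * a + t * a') (s * b + t * b') (s * c + t * c') (s * d + t * d')) := by
  by_cases hk : a' * b - a * b' = 0
  · obtain ⟨s, t, hst, ha, hb⟩ := exists_mul_add_mul_eq_zero_of_det_eq_zero
      (a := a) (b := a') (c := b) (d := b') (by linear_combination -hk)
    refine ⟨s, t, hst, ?_⟩
    rw [ha, hb]
    exact hasRepeatedRoot_cubic_zero_zero _ _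
  · obtain ⟨x, hx⟩ := exists_quartic_eq_zero hk (2 * (a' * c - a * c'))
      (3 * (a' * d - a * d') + (b' * c - b * c')) (2 * (b' * d - b * d')) (c' * d - c * d')
    obtain ⟨s, t, hst, h₀, h₁⟩ := exists_mul_add_mul_eq_zero_of_det_eq_zero
      (a := a * x ^ 3 + b * x ^ 2 + c * x + d) (b := a' * x ^ 3 + b' * x ^ 2 + c' * x + d')
      (c := 3 * a * x ^ 2 + 2 * b * x + c) (d := 3 * a' * x ^ 2 + 2 * b' * x + c')
      (by linear_combination hx)
    exact ⟨s, t, hst, hasRepeatedRoot_cubic_of_root (x := x) (by linear_combination h₀)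
      (by linear_combination h₁)⟩

lemma exists_hasRepeatedRoot_mem {W : Submodule ℂ P2} (hV : W ≤ Vcubic)
    (hdim : Module.finrank ℂ W = 2) : ∃ r ∈ W, r ≠ 0 ∧ HasRepeatedRoot r := by
  obtain ⟨p, hpW, hp0⟩ := W.exists_mem_ne_zero_of_ne_bot (by rintro rfl; simp at hdim)
  obtain ⟨q, hqW, hpq, -⟩ := exists_linearIndependent_pair_eq_span hdim hpW hp0
  obtain ⟨s, t, hst, hr⟩ := exists_hasRepeatedRoot_smul_add_smul
    (cf 3 0 p) (cf 2 1 p) (cf 1 2 p) (cf 0 3 p) (cf 3 0 q) (cf 2 1 q) (cf 1 2 q) (cf 0 3 q)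
  have hrW : s • p + t • q ∈ W := W.add_mem (W.smul_mem s hpW) (W.smul_mem t hqW)
  refine ⟨s • p + t • q, hrW, fun h => ?_, ?_⟩
  · have := LinearIndependent.pair_iff.1 hpq s t h
    tauto
  · rw [eq_cubic_of_mem_Vcubic (hV hrW)]
    simpa only [cf_add, cf_smul] using hr

lemma exists_lf_eq_C_mul_lf {u v s t : ℂ} (huv : u ≠ 0 ∨ v ≠ 0) (h : s * v - t * u = 0) :
    ∃ k : ℂ, lf s t = C k * lf u v := by
  rcases huv with hu | hv
  · refine ⟨s / u, ?_⟩
    rw [← lf_mul_mul]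
    congr 1 <;> field_simp
    linear_combination -h
  · refine ⟨t / v, ?_⟩
    rw [← lf_mul_mul]
    congr 1 <;> field_simp
    linear_combination h

lemma exists_subst_lf_eq {u v s t : ℂ} (hD : s * v - t * u ≠ 0) :
    ∃ g : SL₂, subst g (lf u v) = C (s * v - t * u) * Xv ∧ subst g (lf s t) = -Yv := by
  set D := s * v - t * u with hD_def
  let g : SL₂ := ⟨!![s, u / D; t, v / D], by rw [Matrix.det_fin_two_of]; field_simp; ring⟩
  refine ⟨g, ?_, ?_⟩
  · rw [subst_lf]
    change lf (u * (v / D) - v * (u / D)) (v * s - u * t) = _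
    rw [show u * (v / D) - v * (u / D) = 0 by ring, show v * s - u * t = D by rw [hD_def]; ring]
    simp [lf]
  · rw [subst_lf]
    change lf (s * (v / D) - t * (u / D)) (t * s - s * t) = _
    rw [show s * (v / D) - t * (u / D) = 1 by field_simp; exact hD_def.symm,
      show t * s - s * t = 0 by ring]
    simp [lf]

lemma exists_subst_eq_C_mul_Xv_sq_mul_Yv {r : P2} (hr : HasRepeatedRoot r) (hr0 : r ≠ 0)
    (hcube : ¬ IsPerfectCube r) :
    ∃ (g : SL₂) (c : ℂ), c ≠ 0 ∧ subst g r = C c * (Xv ^ 2 * Yv) := by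
  obtain ⟨u, v, s, t, huv, rfl⟩ := hr
  by_cases hD : s * v - t * u = 0
  · obtain ⟨k, hk⟩ := exists_lf_eq_C_mul_lf huv hD
    refine absurd ⟨k, u, v, ?_, huv, by rw [hk]; ring⟩ hcube
    rintro rfl
    exact hr0 (by rw [hk]; simp)
  · obtain ⟨g, hu, hs⟩ := exists_subst_lf_eq hD
    refine ⟨g, -(s * v - t * u) ^ 2, by simpa using hD, ?_⟩
    rw [map_mul, map_pow, hu, hs, C_neg, C_pow]
    ring

lemma Xv_sq_mul_Yv_eq_cubic : Xv ^ 2 * Yv = cubic 0 1 0 0 := by simp [cubic]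

lemma Xv_cube_add_Yv_cube_eq_cubic : Xv ^ 3 + Yv ^ 3 = cubic 1 0 0 1 := by simp [cubic]

lemma not_isPerfectCube_of_mem_L₃ {p : P2} (hp : p ∈ L₃) : ¬ IsPerfectCube p := by
  rintro ⟨c, a, b, hc, hab, rfl⟩
  obtain ⟨x, y, hxy⟩ := Submodule.mem_span_pair.1 hp
  rw [Xv_sq_mul_Yv_eq_cubic, Xv_cube_add_Yv_cube_eq_cubic, smul_cubic, smul_cubic,
    C_mul_lf_pow_three] at hxy
  have h30 := congrArg (cf 3 0) hxy
  have h12 := congrArg (cf 1 2) hxy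
  have h03 := congrArg (cf 0 3) hxy
  simp only [cf_add, cf_cubic_3_0, cf_cubic_1_2, cf_cubic_0_3] at h30 h12 h03
  have hab₂ : a ^ 2 * b = 0 := by
    simpa [hc] using (by linear_combination -h12 / 3 : c * (a ^ 2 * b) = 0)
  have hab₃ : a ^ 3 + b ^ 3 = 0 := by
    simpa [hc] using (by linear_combination h03 - h30 : c * (a ^ 3 + b ^ 3) = 0)
  obtain ⟨rfl, rfl⟩ : a = 0 ∧ b = 0 := by
    rcases mul_eq_zero.1 hab₂ with ha | rfl
    · obtain rfl := (pow_eq_zero_iff two_ne_zero).1 ha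
      exact ⟨rfl, (pow_eq_zero_iff three_ne_zero).1 (by simpa using hab₃)⟩
    · exact ⟨(pow_eq_zero_iff three_ne_zero).1 (by simpa using hab₃), rfl⟩
  simp at hab

lemma not_exists_isPerfectCube_of_mem_slOrbit {W : Submodule ℂ P2} (h : W ∈ slOrbit L₃) :
    ¬ ∃ p ∈ W, IsPerfectCube p := by
  obtain ⟨g, rfl⟩ := h
  rw [exists_isPerfectCube_mem_mapAct_iff]
  rintro ⟨p, hp, hcube⟩
  exact not_isPerfectCube_of_mem_L₃ hp hcube

/-- Isotropy against `X²Y` kills the `XY²`-coordinate of a second basis vector. -/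
lemma exists_eq_span_cubic_of_Xv_sq_mul_Yv_mem {W : Submodule ℂ P2} (hW : IsLagrangian W)
    (hXY : Xv ^ 2 * Yv ∈ W) (hnc : ¬ ∃ p ∈ W, IsPerfectCube p) :
    ∃ A D : ℂ, A ≠ 0 ∧ D ≠ 0 ∧ W = Submodule.span ℂ {cubic 0 1 0 0, cubic A 0 0 D} := by
  obtain ⟨hV, hdim, hiso⟩ := hW
  rw [Xv_sq_mul_Yv_eq_cubic] at hXY
  obtain ⟨q, hqW, hli, hspan⟩ := exists_linearIndependent_pair_eq_span hdim hXY
    (fun h => by simpa using congrArg (cf 2 1) h)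
  obtain ⟨A, B, C', D, rfl⟩ : ∃ A B C' D, q = cubic A B C' D :=
    ⟨_, _, _, _, eq_cubic_of_mem_Vcubic (hV hqW)⟩
  obtain rfl : C' = 0 := by
    have := hiso _ hXY _ hqW
    rw [omegaForm_cubic] at this
    linear_combination -3 * this
  have hq' : cubic A B 0 D - B • cubic 0 1 0 0 = cubic A 0 0 D := by
    rw [smul_cubic, cubic_sub]
    ring_nf
  have hq'W : cubic A 0 0 D ∈ W := hq' ▸ W.sub_mem hqW (W.smul_mem B hXY)
  have hq'0 : cubic A 0 0 D ≠ 0 := fun h => by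
    simpa using LinearIndependent.pair_iff.1 hli (-B) 1 (by rw [← h, ← hq']; module)
  have hA : A ≠ 0 := by
    rintro rfl
    refine hnc ⟨_, hq'W, D, -1, 0, fun hD => hq'0 ?_, Or.inl (by norm_num), ?_⟩
    · simp [hD, cubic]
    · rw [C_mul_lf_pow_three]
      norm_num
  have hD : D ≠ 0 := by
    rintro rfl
    exact hnc ⟨_, hq'W, A, 0, 1, hA, Or.inr one_ne_zero, by simp [C_mul_lf_pow_three]⟩
  exact ⟨A, D, hA, hD, by rw [hspan, ← span_pair_sub_smul _ _ B, hq']⟩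

/-- `diag (τ, τ⁻¹)` with `τ⁶ = A / D` carries `L₃` onto this span. -/
lemma span_cubic_mem_slOrbit_L₃ {A D : ℂ} (hA : A ≠ 0) (hD : D ≠ 0) :
    Submodule.span ℂ {cubic 0 1 0 0, cubic A 0 0 D} ∈ slOrbit L₃ := by
  obtain ⟨τ, hτ⟩ := IsAlgClosed.exists_pow_nat_eq (A / D) (by norm_num : 0 < 6)
  have hτ0 : τ ≠ 0 := by
    rintro rfl
    exact div_ne_zero hA hD (by simpa using hτ.symm)
  let h : SL₂ := ⟨!![τ, 0; 0, τ⁻¹], by simp [Matrix.det_fin_two_of, hτ0]⟩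
  have hX : subst h Xv = C τ * Xv := by
    rw [subst_Xv]
    change C τ * Xv + C 0 * Yv = _
    simp
  have hY : subst h Yv = C τ⁻¹ * Yv := by
    rw [subst_Yv]
    change C 0 * Xv + C τ⁻¹ * Yv = _
    simp
  have h₁ : subst h (Xv ^ 2 * Yv) = τ • cubic 0 1 0 0 := by
    rw [map_mul, map_pow, hX, hY, ← Xv_sq_mul_Yv_eq_cubic, smul_eq_C_mul,
      show (C τ * Xv) ^ 2 * (C τ⁻¹ * Yv) = C (τ ^ 2 * τ⁻¹) * (Xv ^ 2 * Yv) by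
        simp only [C_mul, C_pow]; ring,
      show τ ^ 2 * τ⁻¹ = τ by field_simp]
  have h₂ : subst h (Xv ^ 3 + Yv ^ 3) = (D * τ ^ 3)⁻¹ • cubic A 0 0 D := by
    rw [smul_cubic, show (D * τ ^ 3)⁻¹ * A = τ ^ 3 by
        rw [eq_div_iff hD] at hτ; rw [← hτ]; field_simp,
      show (D * τ ^ 3)⁻¹ * D = τ⁻¹ ^ 3 by field_simp, mul_zero]
    simp only [cubic, map_add, map_pow, hX, hY, C_0]
    ring
  refine ⟨h, ?_⟩
  rw [L₃, mapAct_span_pair, h₁, h₂, span_pair_smul_smul hτ0 (by simp [hD, hτ0])]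

lemma mem_slOrbit_L₃_of_not_exists_isPerfectCube {W : Submodule ℂ P2} (hW : IsLagrangian W)
    (hnc : ¬ ∃ p ∈ W, IsPerfectCube p) : W ∈ slOrbit L₃ := by
  obtain ⟨r, hrW, hr0, hr⟩ := exists_hasRepeatedRoot_mem hW.1 hW.2.1
  obtain ⟨g, c, hc, hgr⟩ :=
    exists_subst_eq_C_mul_Xv_sq_mul_Yv hr hr0 (fun h => hnc ⟨r, hrW, h⟩)
  have hXY : Xv ^ 2 * Yv ∈ mapAct g W := by
    rw [show Xv ^ 2 * Yv = subst g (c⁻¹ • r) by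
      rw [map_smul, hgr, smul_eq_C_mul, ← mul_assoc, ← C_mul, inv_mul_cancel₀ hc, C_1,
        one_mul]]
    exact Submodule.mem_map_of_mem (W.smul_mem _ hrW)
  have hnc' : ¬ ∃ p ∈ mapAct g W, IsPerfectCube p := by
    rwa [exists_isPerfectCube_mem_mapAct_iff]
  obtain ⟨A, D, hA, hD, hgW⟩ := exists_eq_span_cubic_of_Xv_sq_mul_Yv_mem (hW.mapAct g) hXY hnc'
  exact mem_slOrbit_of_mapAct_mem g (hgW ▸ span_cubic_mem_slOrbit_L₃ hA hD)

/-- A Lagrangian `W` of `V` contains no perfect cube iff it lies in the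
`SL(2,ℂ)`-orbit of `span{X²Y, X³+Y³}`; in particular `SL(2,ℂ)` acts transitively on the set
of Lagrangians of `V` containing no perfect cube. -/
theorem statement8 :
    (∀ W : Submodule ℂ P2, IsLagrangian W →
      ((¬ ∃ p ∈ W, IsPerfectCube p) ↔ W ∈ slOrbit L₃)) ∧
    (∀ W W' : Submodule ℂ P2, IsLagrangian W → IsLagrangian W' →
      (¬ ∃ p ∈ W, IsPerfectCube p) → (¬ ∃ p ∈ W', IsPerfectCube p) →
      ∃ g : Matrix.SpecialLinearGroup (Fin 2) ℂ, mapAct g W = W') := by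
  have hiff (W : Submodule ℂ P2) (hW : IsLagrangian W) :
      (¬ ∃ p ∈ W, IsPerfectCube p) ↔ W ∈ slOrbit L₃ :=
    ⟨mem_slOrbit_L₃_of_not_exists_isPerfectCube hW, not_exists_isPerfectCube_of_mem_slOrbit⟩
  refine ⟨hiff, fun W W' hW hW' hnc hnc' => ?_⟩
  obtain ⟨g, rfl⟩ := (hiff W hW).1 hnc
  obtain ⟨g', rfl⟩ := (hiff W' hW').1 hnc'
  exact ⟨g⁻¹ * g', by rw [mapAct_mapAct, ← mul_assoc, mul_inv_cancel, one_mul]⟩
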